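/- Differential of the map Φ along the ratio-3 rolling distribution: let w₁, w₂ be unit quaternions and z = a + b • i with a, b ∈ ℝ. Then the curve t ↦ ((w₁ + t • (z*j*w₁))⁻¹ * i * (w₁ + t • (z*j*w₁)), (w₁ + t • (z*j*w₁))⁻¹ * (w₂ + (3*t) • (z*j*w₂))) in ℍ × ℍ has derivative at t = 0 equal to (2 • (conj(w₁) * z * k * w₁), 2 • (conj(w₁) * z * j * w₂)). (Thus Φ(w₁ + ℓ w₂) = w₁⁻¹ i w₁ + ℓ (w₁⁻¹ w₂) carries the no-slipping-no-twisting distribution D³ for balls with radii in ratio 3:1 into the divisors-of-zero distribution.) -/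

import Mathlib

open Quaternion

noncomputable section

/-- The quaternion imaginary unit `i`. -/
def qi : ℍ[ℝ] := ⟨0, 1, 0, 0⟩

/-- The quaternion imaginary unit `j`. -/
def qj : ℍ[ℝ] := ⟨0, 0, 1, 0⟩

/-- The quaternion imaginary unit `k`. -/
def qk : ℍ[ℝ] := ⟨0, 0, 0, 1⟩

/-! With `g t = w₁ + t • (p * w₁)` and `p = z j`, the quotient rule
`(g⁻¹ d)' = g⁻¹ (d' - g' g⁻¹ d)` with `g' g⁻¹ = p` gives the derivatives `w₁⁻¹ (i p - p i) w₁`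
and `w₁⁻¹ (3 p w₂ - p w₂)` of the two components. Since `z` commutes with `i` and
`i j = - j i = k`, the commutator `i p - p i` is `2 z k`; and `w₁⁻¹ = conj w₁` as `w₁` is a unit. -/

section Calculus

variable {𝕜 R : Type*} [NontriviallyNormedField 𝕜] [NormedDivisionRing R] [NormedAlgebra 𝕜 R]

theorem hasDerivAt_const_add_smul {E : Type*} [NormedAddCommGroup E] [NormedSpace 𝕜 E]
    (x v : E) (t : 𝕜) : HasDerivAt (fun s => x + s • v) v t := by
  simpa using ((hasDerivAt_id t).smul_const v).const_add x

theorem HasDerivAt.inv' {c : 𝕜 → R} {c' : R} {t : 𝕜} (hc : HasDerivAt c c' t) (ht : c t ≠ 0) :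
    HasDerivAt (fun s => (c s)⁻¹) (-((c t)⁻¹ * c' * (c t)⁻¹)) t :=
  ((hasFDerivAt_inv' ht).comp_hasDerivAt t hc).congr_deriv (by simp)

theorem HasDerivAt.inv_mul {c d : 𝕜 → R} {c' d' : R} {t : 𝕜} (hc : HasDerivAt c c' t)
    (hd : HasDerivAt d d' t) (ht : c t ≠ 0) :
    HasDerivAt (fun s => (c s)⁻¹ * d s) ((c t)⁻¹ * (d' - c' * (c t)⁻¹ * d t)) t :=
  ((hc.inv' ht).fun_mul hd).congr_deriv (by noncomm_ring)

theorem hasDerivAt_inv_add_smul_mul_self_mul {w p : R} (hw : w ≠ 0) {d : 𝕜 → R} {d' : R}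
    (hd : HasDerivAt d d' 0) :
    HasDerivAt (fun s => (w + s • (p * w))⁻¹ * d s) (w⁻¹ * (d' - p * d 0)) 0 := by
  simpa [mul_inv_cancel_right₀ hw] using
    (hasDerivAt_const_add_smul w (p * w) 0).inv_mul hd (by simpa using hw)

end Calculus

theorem qi_mul_qj : qi * qj = qk := by
  ext <;> simp only [re_mul, imI_mul, imJ_mul, imK_mul] <;> simp [qi, qj, qk]

theorem qj_mul_qi : qj * qi = -qk := by
  ext <;> simp only [re_mul, imI_mul, imJ_mul, imK_mul, re_neg, imI_neg, imJ_neg, imK_neg] <;>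
    simp [qi, qj, qk]

theorem commute_qi_coe_add_smul_qi (a b : ℝ) : Commute qi ((a : ℍ[ℝ]) + b • qi) :=
  (coe_commute a qi).symm.add_right ((Commute.refl qi).smul_right b)

theorem qi_mul_mul_qj_sub_mul_qj_mul_qi {z : ℍ[ℝ]} (hz : Commute qi z) :
    qi * (z * qj) - z * qj * qi = 2 • (z * qk) := by
  rw [← mul_assoc, hz.eq, mul_assoc, mul_assoc, qi_mul_qj, qj_mul_qi, mul_neg, sub_neg_eq_add,
    two_smul]

theorem Quaternion.inv_eq_star_of_normSq_eq_one {w : ℍ[ℝ]} (hw : normSq w = 1) :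
    w⁻¹ = star w := by
  rw [inv_def, hw, inv_one, one_smul]

theorem phi_derivative_along_distribution_general (w₁ w₂ : ℍ[ℝ])
    (h₁ : normSq w₁ = 1) (a b : ℝ) :
    HasDerivAt
      (fun t : ℝ =>
        (((w₁ + t • (((a : ℍ[ℝ]) + b • qi) * qj * w₁))⁻¹ * qi *
            (w₁ + t • (((a : ℍ[ℝ]) + b • qi) * qj * w₁)),
          (w₁ + t • (((a : ℍ[ℝ]) + b • qi) * qj * w₁))⁻¹ *
            (w₂ + (3 * t) • (((a : ℍ[ℝ]) + b • qi) * qj * w₂))) : ℍ[ℝ] × ℍ[ℝ]))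
      ((2 • (star w₁ * ((a : ℍ[ℝ]) + b • qi) * qk * w₁),
        2 • (star w₁ * ((a : ℍ[ℝ]) + b • qi) * qj * w₂)) : ℍ[ℝ] × ℍ[ℝ])
      0 := by
  set z : ℍ[ℝ] := (a : ℍ[ℝ]) + b • qi
  have hz : Commute qi z := commute_qi_coe_add_smul_qi a b
  have hw₁ : w₁ ≠ 0 := by
    rintro rfl
    simp at h₁
  have hinv : w₁⁻¹ = star w₁ := inv_eq_star_of_normSq_eq_one h₁
  have hfirst := hasDerivAt_inv_add_smul_mul_self_mul (p := z * qj) hw₁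
    ((hasDerivAt_const_add_smul w₁ (z * qj * w₁) (0 : ℝ)).const_mul qi)
  have hsecond := hasDerivAt_inv_add_smul_mul_self_mul (p := z * qj) hw₁
    ((((hasDerivAt_id' (0 : ℝ)).const_mul 3).smul_const (z * qj * w₂)).const_add w₂)
  convert hfirst.prodMk hsecond using 1
  · funext t
    simp only [mul_assoc]
  simp only [zero_smul, add_zero, mul_zero, mul_one]
  congr 1
  · rw [← mul_assoc qi, ← mul_assoc (z * qj) qi, ← sub_mul,
      qi_mul_mul_qj_sub_mul_qj_mul_qi hz, hinv, smul_mul_assoc, mul_smul_comm]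
    simp only [mul_assoc]
  · rw [show (3 : ℝ) • (z * qj * w₂) - z * qj * w₂ = 2 • (z * qj * w₂) by module, hinv,
      mul_smul_comm]
    simp only [mul_assoc]

/-- Differential at `t = 0` of the map `Φ` along the ratio-3 rolling distribution:
the curve `t ↦ (g(t)⁻¹ i g(t), g(t)⁻¹ (w₂ + 3t z j w₂))`, with `g(t) = w₁ + t z j w₁`,
has derivative `(2 conj(w₁) z k w₁, 2 conj(w₁) z j w₂)` at `t = 0`. -/
theorem phi_derivative_along_distribution (w₁ w₂ : ℍ[ℝ])
    (h₁ : normSq w₁ = 1) (h₂ : normSq w₂ = 1) (a b : ℝ) :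
    HasDerivAt
      (fun t : ℝ =>
        (((w₁ + t • (((a : ℍ[ℝ]) + b • qi) * qj * w₁))⁻¹ * qi *
            (w₁ + t • (((a : ℍ[ℝ]) + b • qi) * qj * w₁)),
          (w₁ + t • (((a : ℍ[ℝ]) + b • qi) * qj * w₁))⁻¹ *
            (w₂ + (3 * t) • (((a : ℍ[ℝ]) + b • qi) * qj * w₂))) : ℍ[ℝ] × ℍ[ℝ]))
      ((2 • (star w₁ * ((a : ℍ[ℝ]) + b • qi) * qk * w₁),
        2 • (star w₁ * ((a : ℍ[ℝ]) + b • qi) * qj * w₂)) : ℍ[ℝ] × ℍ[ℝ])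
      0 :=
  phi_derivative_along_distribution_general w₁ w₂ h₁ a b
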